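/- arXiv:1212.5692 — 3 statements merged into one kernel-verified Lean document; each statement's English description precedes it below -/
import Mathlib

section
/- For every pullback-preserving functor A on a category of worlds, the assignment S(A) defined by S(A)w = A w and, for a pullback square ◇ = w (x,u; x',u') w' with apex w̄, S(A)◇(a,a') = A w̄(x.a, x'.a'), equipped with composition t_{S(A)}(p,p') = t_A(z.p, z'.p') along composed squares, is a fibred setoid: it admits reflexivity, symmetry and transitivity operations and satisfies the pullback-decomposition property. -/
/-!
Proofs in `S(A)` over a square live at its apex, while `A` preserves pullbacks, so an apex proof
can always be lowered to an element of the low point (`PPF.paste`) and raised again along the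
commuting square. Transport along isomorphic squares and the decomposition property are both
"lower, then raise". For transitivity, the composite of `w ◇ w'` and `w' ◇' w''` has as low point
a pullback of the inner span legs and as apex a completion of the inner cospan to a pullback
square; the outer rectangle is then a pullback by pasting, and the two proofs meet at the new
apex because the inner cospan commutes.
-/

open CategoryTheory

universe v u

/-- A proof-relevant setoid: a carrier together with, for any two elements, a set of
proofs of equality, with reflexivity, symmetry and transitivity operations. -/
structure PSetoid : Type 1 where
  carrier : Type
  Eq : carrier → carrier → Type
  refl : ∀ x, Eq x x
  symm : ∀ {x y}, Eq x y → Eq y x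
  trans : ∀ {x y z}, Eq x y → Eq y z → Eq x z

/-- `x` and `y` are jointly epic. -/
def JointlyEpic {W : Type u} [Category.{v} W] {a b c : W} (x : a ⟶ c) (y : b ⟶ c) : Prop :=
  ∀ {d : W} (h k : c ⟶ d), x ≫ h = x ≫ k → y ≫ h = y ≫ k → h = k

/-- Every cospan can be completed to a pullback square. -/
def HasWorldPullbacks (W : Type u) [Category.{v} W] : Prop :=
  ∀ {a b c : W} (x : a ⟶ c) (y : b ⟶ c),
    ∃ (p : W) (u : p ⟶ a) (v : p ⟶ b), IsPullback u v x y

/-- Every span can be completed to a minimal pullback square. -/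
def SpansComplete (W : Type u) [Category.{v} W] : Prop :=
  ∀ {p a b : W} (u : p ⟶ a) (v : p ⟶ b),
    ∃ (c : W) (x : a ⟶ c) (y : b ⟶ c), IsPullback u v x y ∧ JointlyEpic x y

/-- All morphisms are monomorphisms. -/
def AllMono (W : Type u) [Category.{v} W] : Prop :=
  ∀ {a b : W} (f : a ⟶ b), Mono f

/-- A pullback-preserving, setoid-valued functor on a category of worlds. -/
structure PPF (W : Type u) [Category.{v} W] : Type (max u v 1) where
  obj : W → PSetoid
  map : ∀ {w w' : W}, (w ⟶ w') → (obj w).carrier → (obj w').carrier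
  mapEq : ∀ {w w' : W} (u : w ⟶ w') {a b : (obj w).carrier},
    (obj w).Eq a b → (obj w').Eq (map u a) (map u b)
  map_id : ∀ {w : W} (a : (obj w).carrier), map (𝟙 w) a = a
  map_comp : ∀ {w w' w'' : W} (u : w ⟶ w') (u' : w' ⟶ w'') (a : (obj w).carrier),
    map (u ≫ u') a = map u' (map u a)
  paste : ∀ {l w w' ap : W} {u : l ⟶ w} {u' : l ⟶ w'} {x : w ⟶ ap} {x' : w' ⟶ ap},
    IsPullback u u' x x' →
    ∀ (a : (obj w).carrier) (a' : (obj w').carrier),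
      (obj ap).Eq (map x a) (map x' a') →
      Σ' b : (obj l).carrier,
        PProd ((obj w).Eq (map u b) a) ((obj w').Eq (map u' b) a')

/-- A bundled pullback square from `w` to `w'`, with low point, apex, span legs
`u, u'` and cospan (apex) legs `x, x'`. -/
structure PBSq (W : Type u) [Category.{v} W] (w w' : W) : Type (max u v) where
  low : W
  apex : W
  u : low ⟶ w
  u' : low ⟶ w'
  x : w ⟶ apex
  x' : w' ⟶ apex
  is : IsPullback u u' x x'

/-- The symmetry operation on pullback squares. -/
def PBSq.symm {W : Type u} [Category.{v} W] {w w' : W} (sq : PBSq W w w') : PBSq W w' w :=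
  ⟨sq.low, sq.apex, sq.u', sq.u, sq.x', sq.x, sq.is.flip⟩

/-- The trivial pullback square `(u,1;1,u)` associated to a morphism `u`. -/
def PBSq.triv {W : Type u} [Category.{v} W] {l w : W} (u : l ⟶ w) : PBSq W l w :=
  ⟨l, w, 𝟙 l, u, u, 𝟙 w, IsPullback.id_horiz u⟩

/-- The identity (reflexivity) pullback square at a world `w`. -/
def PBSq.idSq {W : Type u} [Category.{v} W] (w : W) : PBSq W w w :=
  PBSq.triv (𝟙 w)

/-- Two pullback squares between the same worlds are isomorphic when there is an
isomorphism of low points commuting with the span legs. -/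
def PBSqIso {W : Type u} [Category.{v} W] {w w' : W} (s1 s2 : PBSq W w w') : Prop :=
  ∃ f : s1.low ≅ s2.low, f.hom ≫ s2.u = s1.u ∧ f.hom ≫ s2.u' = s1.u'

/-- The proof sets of the fibred setoid `S(A)` induced by a pullback-preserving
functor `A`: proofs over a square are equality proofs at its apex. -/
def SPf {W : Type u} [Category.{v} W] (A : PPF W) {w w' : W} (sq : PBSq W w w')
    (a : (A.obj w).carrier) (a' : (A.obj w').carrier) : Type :=
  (A.obj sq.apex).Eq (A.map sq.x a) (A.map sq.x' a')

section

variable {W : Type u} [Category.{v} W]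

theorem CategoryTheory.IsPullback.paste_staircase {l₁ l₂ m w w' w'' a₁ a₂ c : W}
    {f : m ⟶ l₁} {g : m ⟶ l₂} {u₁ : l₁ ⟶ w} {u₁' : l₁ ⟶ w'} {u₂ : l₂ ⟶ w'} {u₂' : l₂ ⟶ w''}
    {x₁ : w ⟶ a₁} {x₁' : w' ⟶ a₁} {x₂ : w' ⟶ a₂} {x₂' : w'' ⟶ a₂} {z : a₁ ⟶ c} {z' : a₂ ⟶ c}
    (hm : IsPullback f g u₁' u₂) (h₁ : IsPullback u₁ u₁' x₁ x₁')
    (h₂ : IsPullback u₂ u₂' x₂ x₂') (hc : IsPullback x₁' x₂ z z') :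
    IsPullback (f ≫ u₁) (g ≫ u₂') (x₁ ≫ z) (x₂' ≫ z') :=
  (IsPullback.paste_horiz (hm.flip.paste_vert h₁.flip) (h₂.flip.paste_vert hc.flip)).flip

theorem PPF.map_map_eq_of_comm (A : PPF W) {w₀ w₁ w₂ w₃ : W} {f : w₀ ⟶ w₁} {g : w₀ ⟶ w₂}
    {h : w₁ ⟶ w₃} {k : w₂ ⟶ w₃} (comm : f ≫ h = g ≫ k) (a : (A.obj w₀).carrier) :
    A.map h (A.map f a) = A.map k (A.map g a) := by
  rw [← A.map_comp, ← A.map_comp, comm]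

def PBSq.comp {w w' w'' : W} (sq₁ : PBSq W w w') (sq₂ : PBSq W w' w'') {m c : W}
    {f : m ⟶ sq₁.low} {g : m ⟶ sq₂.low} (hm : IsPullback f g sq₁.u' sq₂.u)
    {z : sq₁.apex ⟶ c} {z' : sq₂.apex ⟶ c} (hc : IsPullback sq₁.x' sq₂.x z z') :
    PBSq W w w'' :=
  ⟨m, c, f ≫ sq₁.u, g ≫ sq₂.u', sq₁.x ≫ z, sq₂.x' ≫ z', hm.paste_staircase sq₁.is sq₂.is hc⟩

namespace SPf

variable (A : PPF W)

def refl (w : W) (a : (A.obj w).carrier) : SPf A (PBSq.idSq w) a a :=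
  (A.obj w).refl _

variable {A}

def symm {w w' : W} {sq : PBSq W w w'} {a : (A.obj w).carrier} {a' : (A.obj w').carrier}
    (p : SPf A sq a a') : SPf A sq.symm a' a :=
  (A.obj sq.apex).symm p

def trans {w w' w'' : W} {sq₁ : PBSq W w w'} {sq₂ : PBSq W w' w''} {m c : W}
    {f : m ⟶ sq₁.low} {g : m ⟶ sq₂.low} (hm : IsPullback f g sq₁.u' sq₂.u)
    {z : sq₁.apex ⟶ c} {z' : sq₂.apex ⟶ c} (hc : IsPullback sq₁.x' sq₂.x z z')
    {a : (A.obj w).carrier} {a' : (A.obj w').carrier} {a'' : (A.obj w'').carrier}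
    (p : SPf A sq₁ a a') (q : SPf A sq₂ a' a'') : SPf A (sq₁.comp sq₂ hm hc) a a'' := by
  change (A.obj c).Eq (A.map (sq₁.x ≫ z) a) (A.map (sq₂.x' ≫ z') a'')
  rw [A.map_comp, A.map_comp]
  have hmid := A.map_map_eq_of_comm hc.w a'
  exact (A.obj c).trans (A.mapEq z p) (hmid ▸ A.mapEq z' q)

def ofLow {w w' : W} {sq : PBSq W w w'} {a : (A.obj w).carrier} {a' : (A.obj w').carrier}
    (b : (A.obj sq.low).carrier) (e : (A.obj w).Eq (A.map sq.u b) a)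
    (e' : (A.obj w').Eq (A.map sq.u' b) a') : SPf A sq a a' :=
  have hmid := A.map_map_eq_of_comm sq.is.w b
  (A.obj sq.apex).trans (A.mapEq sq.x ((A.obj w).symm e)) (hmid ▸ A.mapEq sq.x' e')

def ofTriv {l w : W} {u : l ⟶ w} {b : (A.obj l).carrier} {a : (A.obj w).carrier}
    (e : (A.obj w).Eq (A.map u b) a) : SPf A (PBSq.triv u) b a := by
  change (A.obj w).Eq (A.map u b) (A.map (𝟙 w) a)
  rwa [A.map_id]

def decompose {w w' : W} {sq : PBSq W w w'} {a : (A.obj w).carrier} {a' : (A.obj w').carrier}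
    (p : SPf A sq a a') :
    Σ' b : (A.obj sq.low).carrier,
      PProd (SPf A (PBSq.triv sq.u) b a) (SPf A (PBSq.triv sq.u') b a') :=
  let ⟨b, e, e'⟩ := A.paste sq.is a a' p
  ⟨b, ofTriv e, ofTriv e'⟩

noncomputable def ofIso {w w' : W} {sq₁ sq₂ : PBSq W w w'} (h : PBSqIso sq₁ sq₂)
    {a : (A.obj w).carrier} {a' : (A.obj w').carrier} (p : SPf A sq₁ a a') :
    SPf A sq₂ a a' := by
  obtain ⟨b, e, e'⟩ := A.paste sq₁.is a a' p
  refine ofLow (A.map h.choose.hom b) ?_ ?_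
  · rwa [← A.map_comp, h.choose_spec.1]
  · rwa [← A.map_comp, h.choose_spec.2]

end SPf

end

theorem stmt_7_general {W : Type u} [Category.{v} W]
    (hpb : HasWorldPullbacks W) (hspan : SpansComplete W)
    (A : PPF W) :
    Nonempty (∀ (w : W) (a : (A.obj w).carrier), SPf A (PBSq.idSq w) a a) ∧
    Nonempty (∀ (w w' : W) (sq : PBSq W w w') (a : (A.obj w).carrier)
      (a' : (A.obj w').carrier), SPf A sq a a' → SPf A sq.symm a' a) ∧
    Nonempty (∀ (w w' w'' : W) (sq1 : PBSq W w w') (sq2 : PBSq W w' w'')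
      (a : (A.obj w).carrier) (a' : (A.obj w').carrier) (a'' : (A.obj w'').carrier),
      SPf A sq1 a a' → SPf A sq2 a' a'' → Σ' sq : PBSq W w w'', SPf A sq a a'') ∧
    Nonempty (∀ (w w' : W) (sq1 sq2 : PBSq W w w'), PBSqIso sq1 sq2 →
      ∀ (a : (A.obj w).carrier) (a' : (A.obj w').carrier),
        SPf A sq1 a a' → SPf A sq2 a a') ∧
    Nonempty (∀ (w w' : W) (sq : PBSq W w w') (a : (A.obj w).carrier)
      (a' : (A.obj w').carrier), SPf A sq a a' →
      Σ' b : (A.obj sq.low).carrier,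
        PProd (SPf A (PBSq.triv sq.u) b a) (SPf A (PBSq.triv sq.u') b a')) := by
  choose m f g hm using fun (a b c : W) (x : a ⟶ c) (y : b ⟶ c) ↦ hpb x y
  choose c z z' hc _ using fun (p a b : W) (u : p ⟶ a) (v : p ⟶ b) ↦ hspan u v
  exact ⟨⟨SPf.refl A⟩, ⟨fun _ _ _ _ _ ↦ SPf.symm⟩,
    ⟨fun _ _ _ sq₁ sq₂ _ _ _ p q ↦
      ⟨_, SPf.trans (hm _ _ _ sq₁.u' sq₂.u) (hc _ _ _ sq₁.x' sq₂.x) p q⟩⟩,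
    ⟨fun _ _ _ _ h _ _ ↦ SPf.ofIso h⟩, ⟨fun _ _ _ _ _ ↦ SPf.decompose⟩⟩

/-- For every pullback-preserving functor `A` on a category of worlds, `S(A)` is a
fibred setoid: it admits reflexivity, symmetry, and transitivity operations (the
latter producing a proof over some composite square), transport along isomorphic
pullback squares, and the pullback-decomposition property. -/
theorem stmt_7 {W : Type u} [Category.{v} W]
    (hpb : HasWorldPullbacks W) (hspan : SpansComplete W) (hmono : AllMono W)
    (A : PPF W) :
    Nonempty (∀ (w : W) (a : (A.obj w).carrier), SPf A (PBSq.idSq w) a a) ∧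
    Nonempty (∀ (w w' : W) (sq : PBSq W w w') (a : (A.obj w).carrier)
      (a' : (A.obj w').carrier), SPf A sq a a' → SPf A sq.symm a' a) ∧
    Nonempty (∀ (w w' w'' : W) (sq1 : PBSq W w w') (sq2 : PBSq W w' w'')
      (a : (A.obj w).carrier) (a' : (A.obj w').carrier) (a'' : (A.obj w'').carrier),
      SPf A sq1 a a' → SPf A sq2 a' a'' → Σ' sq : PBSq W w w'', SPf A sq a a'') ∧
    Nonempty (∀ (w w' : W) (sq1 sq2 : PBSq W w w'), PBSqIso sq1 sq2 →
      ∀ (a : (A.obj w).carrier) (a' : (A.obj w').carrier),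
        SPf A sq1 a a' → SPf A sq2 a a') ∧
    Nonempty (∀ (w w' : W) (sq : PBSq W w w') (a : (A.obj w).carrier)
      (a' : (A.obj w').carrier), SPf A sq a a' →
      Σ' b : (A.obj sq.low).carrier,
        PProd (SPf A (PBSq.triv sq.u) b a) (SPf A (PBSq.triv sq.u') b a')) :=
  stmt_7_general hpb hspan A
end

section
/- If two abstract locations 𝔩₁ and 𝔩₂ on the heap predomain ℍ are independent, then their joint location 𝔩₁⊗𝔩₂, defined by (𝔩₁⊗𝔩₂)^R = 𝔩₁^R ∩ 𝔩₂^R, (𝔩₁⊗𝔩₂)^G = (𝔩₁^G ∪ 𝔩₂^G)^* (closure under composition), and (𝔩₁⊗𝔩₂)^F(h) = 𝔩₁^F(h) ∪ 𝔩₂^F(h), is again an abstract location, i.e. satisfies the three conditions relating rely, guarantee and footprint. -/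
/-!
On the domain of the joint rely `J = R₁ ⊓ R₂` every guarantee of either location preserves `J`
and is idempotent up to `J`, and independence makes the guarantees of the two locations commute
up to `J`. Hence every composite of guarantees is `J`-related to a normal form `a * b` with `a` a
guarantee of the first location and `b` one of the second, and normal forms are again idempotent
up to `J`. The footprint conditions hold componentwise, and locality survives composition.
-/

/-- The raw data of an abstract location: a rely relation on heaps, a guarantee set of
heap functions, and a footprint. -/
structure RawLoc (H L : Type) : Type where
  R : H → H → Prop
  G : Set (H → H)
  F : H → Set L

/-- An abstract location on heaps `H` (with locations `L`, values `V`, domain map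
`dom` and lookup `look`): raw data subject to the rely/guarantee/footprint
conditions of the paper. -/
structure AbsLoc (H L V : Type) (dom : H → Set L) (look : H → L → V)
    extends RawLoc H L : Type where
  R_nonempty : ∃ h, R h h
  R_symm : ∀ {h h'}, R h h' → R h' h
  R_trans : ∀ {h h' h''}, R h h' → R h' h'' → R h h''
  G_comp : ∀ ι κ, ι ∈ G → κ ∈ G → (ι ∘ κ) ∈ G
  rely_guarantee : ∀ ι ∈ G, ∀ {h h' : H}, R h h' →
    R (ι h) (ι h') ∧ R (ι h) (ι (ι h)) ∧ R (ι h') (ι (ι h'))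
  footprint_rely : ∀ {h h' h1 h1' : H},
    (∀ l ∈ F h, look h1 l = look h l) → (∀ l ∈ F h', look h1' l = look h' l) →
    R h h' → R h1 h1'
  guarantee_local : ∀ ι ∈ G, ∀ h : H, dom h ⊆ dom (ι h) ∧
    ∀ l ∈ dom h, l ∉ F h → l ∉ F (ι h) ∧ look h l = look (ι h) l

/-- Independence of two abstract locations (stated on their raw data). -/
def Indep {H L V : Type} (dom : H → Set L) (look : H → L → V)
    (l1 l2 : RawLoc H L) : Prop :=
  (∀ ι ∈ l1.G, ∀ h h', l1.R h h → l2.R h h' → l2.R (ι h) h') ∧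
  (∀ ι ∈ l2.G, ∀ h h', l2.R h h → l1.R h h' → l1.R (ι h) h') ∧
  (∀ ι ∈ l1.G, ∀ h : H, ∀ l ∈ dom h, l ∉ l2.F h → l ∉ l2.F (ι h)) ∧
  (∀ ι ∈ l2.G, ∀ h : H, ∀ l ∈ dom h, l ∉ l1.F h → l ∉ l1.F (ι h)) ∧
  (∀ h1 h2, l1.R h1 h1 → l2.R h2 h2 → ∃ h, l1.R h h1 ∧ l2.R h h2)

/-- Closure of a set of functions under composition. -/
inductive CompClosure {H : Type} (S : Set (H → H)) : (H → H) → Prop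
  | base {f} : f ∈ S → CompClosure S f
  | comp {f g} : CompClosure S f → CompClosure S g → CompClosure S (f ∘ g)

/-- The joint location `𝔩₁ ⊗ 𝔩₂`: relies intersected, guarantees the composition
closure of the union, footprints united. -/
def jointRaw {H L : Type} (l1 l2 : RawLoc H L) : RawLoc H L where
  R h h' := l1.R h h' ∧ l2.R h h'
  G := {f | CompClosure (l1.G ∪ l2.G) f}
  F h := l1.F h ∪ l2.F h

open Relator

section PartialEquivalence

variable {α : Type*} {r s : α → α → Prop}

theorem rel_self_left [Std.Symm r] [IsTrans α r] {a b : α} (h : r a b) : r a a :=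
  trans_of r h (symm_of r h)

theorem rel_self_right [Std.Symm r] [IsTrans α r] {a b : α} (h : r a b) : r b b :=
  trans_of r (symm_of r h) h

instance [Std.Symm r] [Std.Symm s] : Std.Symm (r ⊓ s) :=
  ⟨fun _ _ h => ⟨symm_of r h.1, symm_of s h.2⟩⟩

instance [IsTrans α r] [IsTrans α s] : IsTrans α (r ⊓ s) :=
  ⟨fun _ _ _ h h' => ⟨trans_of r h.1 h'.1, trans_of s h.2 h'.2⟩⟩

instance [Std.Symm r] : @Std.Symm (Function.End α) (r ⇒ r) :=
  ⟨fun _ _ h _ _ hab => symm_of r (h (symm_of r hab))⟩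

instance [Std.Symm r] [IsTrans α r] : @IsTrans (Function.End α) (r ⇒ r) :=
  ⟨fun _ _ _ h h' _ _ hab => trans_of r (h hab) (h' (rel_self_right hab))⟩

theorem liftFun_mul {f f' g g' : Function.End α} (hf : (r ⇒ r) f f') (hg : (r ⇒ r) g g') :
    (r ⇒ r) (f * g) (f' * g') :=
  fun _ _ h => hf (hg h)

theorem rel_apply_of_liftFun [Std.Symm r] [IsTrans α r] {f : α → α} (hf : (r ⇒ r) f f)
    (hff : (r ⇒ r) (f ∘ f) f) {a b : α} (h : r a b) :
    r (f a) (f b) ∧ r (f a) (f (f a)) ∧ r (f b) (f (f b)) :=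
  ⟨hf h, symm_of r (hff (rel_self_left h)), symm_of r (hff (rel_self_right h))⟩

theorem liftFun_of_rel_apply [Std.Symm r] [IsTrans α r] {f : α → α}
    (hf : ∀ ⦃a b⦄, r a b → r (f a) (f b) ∧ r (f a) (f (f a)) ∧ r (f b) (f (f b))) :
    (r ⇒ r) f f ∧ (r ⇒ r) (f ∘ f) f :=
  ⟨fun _ _ h => (hf h).1, fun _ _ h => trans_of r (symm_of r (hf h).2.1) (hf h).1⟩

end PartialEquivalence

section Invisible

variable {α : Type*} {r s : α → α → Prop}

/-- Independence says that the guarantees of each location are invisible to the other's rely. -/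
def Invisible (r s : α → α → Prop) (f : α → α) : Prop :=
  ∀ a b, r a a → s a b → s (f a) b

theorem Invisible.comp {f g : α → α} (hf : Invisible r s f) (hg : Invisible r s g)
    (hgr : (r ⇒ r) g g) : Invisible r s (f ∘ g) :=
  fun a _ ha hab => hf _ _ (hgr ha) (hg a _ ha hab)

variable [Std.Symm r] [IsTrans α r] [Std.Symm s] [IsTrans α s]

theorem liftFun_inf_of_invisible {f g : α → α} (hfg : (r ⇒ r) f g) (hf : Invisible r s f)
    (hg : Invisible r s g) : (r ⊓ s ⇒ r ⊓ s) f g := fun a b hab =>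
  ⟨hfg hab.1, trans_of s (hf a b (rel_self_left hab.1) hab.2)
    (symm_of s (hg b b (rel_self_right hab.1) (rel_self_right hab.2)))⟩

theorem liftFun_inf_comp_comm {f g : α → α} (hf : (r ⇒ r) f f) (hfi : Invisible r s f)
    (hg : (s ⇒ s) g g) (hgi : Invisible s r g) : (r ⊓ s ⇒ r ⊓ s) (g ∘ f) (f ∘ g) := by
  intro a b ⟨hr, hs⟩
  have hfa : s (f a) a := hfi a a (rel_self_left hr) (rel_self_left hs)
  have hgb : r (g b) b := hgi b b (rel_self_right hs) (rel_self_right hr)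
  refine ⟨trans_of r (hgi _ _ (rel_self_left hfa) (hf (rel_self_left hr))) ?_, ?_⟩
  · exact hf (trans_of r hr (symm_of r hgb))
  · exact trans_of s (hg (hfi a b (rel_self_left hr) hs))
      (symm_of s (hfi _ _ (rel_self_left hgb) (hg (rel_self_right hs))))

end Invisible

section IdempotentSubmonoids

variable {M : Type*} [Monoid M] {r : M → M → Prop}
  (hmul : ∀ {a a' b b' : M}, r a a' → r b b' → r (a * b) (a' * b'))
  {A B : Submonoid M} (hcomm : ∀ a ∈ A, ∀ b ∈ B, r (b * a) (a * b))
include hmul hcomm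

theorem rel_mul_mul_swap {a a' b b' : M} (ha : r a a) (ha' : a' ∈ A) (hb : b ∈ B)
    (hb' : r b' b') : r (a * b * (a' * b')) (a * a' * (b * b')) := by
  simpa only [mul_assoc] using hmul (hmul ha (hcomm a' ha' b hb)) hb'

variable [IsTrans M r] (hA : ∀ a ∈ A, r a a ∧ r (a * a) a) (hB : ∀ b ∈ B, r b b ∧ r (b * b) b)
include hA hB

theorem exists_rel_mul_of_mem_sup {x : M} (hx : x ∈ A ⊔ B) :
    ∃ a ∈ A, ∃ b ∈ B, r x (a * b) := by
  rw [Submonoid.sup_eq_closure] at hx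
  induction hx using Submonoid.closure_induction with
  | mem x hx =>
    rcases hx with ha | hb
    · exact ⟨x, ha, 1, B.one_mem, by simpa using (hA x ha).1⟩
    · exact ⟨1, A.one_mem, x, hb, by simpa using (hB x hb).1⟩
  | one => exact ⟨1, A.one_mem, 1, B.one_mem, by simpa using (hA 1 A.one_mem).1⟩
  | mul x y _ _ hx hy =>
    obtain ⟨a, ha, b, hb, hxab⟩ := hx
    obtain ⟨a', ha', b', hb', hyab⟩ := hy
    exact ⟨a * a', A.mul_mem ha ha', b * b', B.mul_mem hb hb', trans_of r (hmul hxab hyab)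
      (rel_mul_mul_swap hmul hcomm (hA a ha).1 ha' hb (hB b' hb').1)⟩

theorem rel_mul_self_of_mem_sup [Std.Symm r] {x : M} (hx : x ∈ A ⊔ B) :
    r x x ∧ r (x * x) x := by
  obtain ⟨a, ha, b, hb, hxab⟩ := exists_rel_mul_of_mem_sup hmul hcomm hA hB hx
  refine ⟨rel_self_left hxab, ?_⟩
  calc r (x * x) (a * b * (a * b)) := hmul hxab hxab
    r _ (a * a * (b * b)) := rel_mul_mul_swap hmul hcomm (hA a ha).1 ha hb (hB b hb).1
    r _ (a * b) := hmul (hA a ha).2 (hB b hb).2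
    r _ x := symm_of r hxab

end IdempotentSubmonoids

section Heaps

variable {H L V : Type} {dom : H → Set L} {look : H → L → V}

def IsLocal (dom : H → Set L) (look : H → L → V) (F : H → Set L) (ι : H → H) : Prop :=
  ∀ h, dom h ⊆ dom (ι h) ∧ ∀ l ∈ dom h, l ∉ F h → l ∉ F (ι h) ∧ look h l = look (ι h) l

theorem IsLocal.comp {F : H → Set L} {ι κ : H → H} (hι : IsLocal dom look F ι)
    (hκ : IsLocal dom look F κ) : IsLocal dom look F (ι ∘ κ) := fun h =>
  ⟨(hκ h).1.trans (hι (κ h)).1, fun l hl hlF =>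
    have hκl := (hκ h).2 l hl hlF
    have hιl := (hι (κ h)).2 l ((hκ h).1 hl) hκl.1
    ⟨hιl.1, hκl.2.trans hιl.2⟩⟩

theorem IsLocal.sup {F F' : H → Set L} {ι : H → H} (hι : IsLocal dom look F ι)
    (hF' : ∀ h, ∀ l ∈ dom h, l ∉ F' h → l ∉ F' (ι h)) : IsLocal dom look (F ⊔ F') ι :=
  fun h => ⟨(hι h).1, fun l hl hlF =>
    ⟨fun hlι => hlι.elim ((hι h).2 l hl (hlF <| .inl ·)).1 (hF' h l hl (hlF <| .inr ·)),
      ((hι h).2 l hl (hlF <| .inl ·)).2⟩⟩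

namespace AbsLoc

variable (l : AbsLoc H L V dom look)

instance : Std.Symm l.R := ⟨fun _ _ => l.R_symm⟩

instance : IsTrans H l.R := ⟨fun _ _ _ => l.R_trans⟩

/-- The identity is adjoined so that normal forms `a * b` need no case split. -/
def guarantee : Submonoid (Function.End H) where
  carrier := insert 1 l.G
  mul_mem' := by
    rintro f g (rfl | hf) (rfl | hg)
    exacts [.inl rfl, .inr hg, .inr hf, .inr (l.G_comp f g hf hg)]
  one_mem' := Set.mem_insert _ _

theorem liftFun_of_mem_guarantee {ι : Function.End H} (hι : ι ∈ l.guarantee) :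
    (l.R ⇒ l.R) ι ι ∧ (l.R ⇒ l.R) (ι * ι) ι := by
  rcases hι with rfl | hι
  · exact ⟨fun _ _ h => h, fun _ _ h => h⟩
  · exact liftFun_of_rel_apply fun _ _ => l.rely_guarantee ι hι

theorem invisible_of_mem_guarantee {s : H → H → Prop} (hinv : ∀ ι ∈ l.G, Invisible l.R s ι)
    {ι : Function.End H} (hι : ι ∈ l.guarantee) : Invisible l.R s ι := by
  rcases hι with rfl | hι
  exacts [fun _ _ _ h => h, hinv ι hι]

theorem liftFun_inf_of_mem_guarantee {s : H → H → Prop} [Std.Symm s] [IsTrans H s]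
    (hinv : ∀ ι ∈ l.G, Invisible l.R s ι) {ι : Function.End H} (hι : ι ∈ l.guarantee) :
    (l.R ⊓ s ⇒ l.R ⊓ s) ι ι ∧ (l.R ⊓ s ⇒ l.R ⊓ s) (ι * ι) ι := by
  have hinvι := l.invisible_of_mem_guarantee hinv hι
  have hrel := l.liftFun_of_mem_guarantee hι
  exact ⟨liftFun_inf_of_invisible hrel.1 hinvι hinvι,
    liftFun_inf_of_invisible hrel.2 (hinvι.comp hinvι hrel.1) hinvι⟩

end AbsLoc

theorem mem_sup_guarantee_of_compClosure (l1 l2 : AbsLoc H L V dom look) {ι : H → H}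
    (hι : CompClosure (l1.G ∪ l2.G) ι) : ι ∈ l1.guarantee ⊔ l2.guarantee := by
  induction hι with
  | base hf =>
    rcases hf with hf | hf
    exacts [le_sup_left (a := l1.guarantee) (Set.mem_insert_of_mem 1 hf),
      le_sup_right (b := l2.guarantee) (Set.mem_insert_of_mem 1 hf)]
  | comp _ _ hf hg => exact mul_mem hf hg

variable {l1 l2 : AbsLoc H L V dom look} (hind : Indep dom look l1.toRawLoc l2.toRawLoc)
include hind

theorem liftFun_inf_of_compClosure {ι : H → H} (hι : CompClosure (l1.G ∪ l2.G) ι) :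
    (l1.R ⊓ l2.R ⇒ l1.R ⊓ l2.R) ι ι ∧ (l1.R ⊓ l2.R ⇒ l1.R ⊓ l2.R) (ι ∘ ι) ι := by
  have hcomm : ∀ a ∈ l1.guarantee, ∀ b ∈ l2.guarantee,
      (l1.R ⊓ l2.R ⇒ l1.R ⊓ l2.R) (b * a) (a * b) := fun a ha b hb =>
    liftFun_inf_comp_comm (l1.liftFun_of_mem_guarantee ha).1
      (l1.invisible_of_mem_guarantee hind.1 ha) (l2.liftFun_of_mem_guarantee hb).1
      (l2.invisible_of_mem_guarantee hind.2.1 hb)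
  have hidem₂ : ∀ b ∈ l2.guarantee, (l1.R ⊓ l2.R ⇒ l1.R ⊓ l2.R) b b ∧
      (l1.R ⊓ l2.R ⇒ l1.R ⊓ l2.R) (b * b) b := fun b hb => by
    rw [inf_comm]
    exact l2.liftFun_inf_of_mem_guarantee hind.2.1 hb
  exact rel_mul_self_of_mem_sup (M := Function.End H) (r := (l1.R ⊓ l2.R ⇒ l1.R ⊓ l2.R))
    liftFun_mul hcomm
    (fun a ha => l1.liftFun_inf_of_mem_guarantee hind.1 ha) hidem₂
    (mem_sup_guarantee_of_compClosure l1 l2 hι)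

theorem isLocal_sup_of_compClosure {ι : H → H} (hι : CompClosure (l1.G ∪ l2.G) ι) :
    IsLocal dom look (l1.F ⊔ l2.F) ι := by
  induction hι with
  | base hf =>
    rcases hf with hf | hf
    · exact IsLocal.sup (l1.guarantee_local _ hf) (hind.2.2.1 _ hf)
    · rw [sup_comm]
      exact IsLocal.sup (l2.guarantee_local _ hf) (hind.2.2.2.1 _ hf)
  | comp _ _ hf hg => exact hf.comp hg

end Heaps

/-- If abstract locations `𝔩₁`, `𝔩₂` are independent, then the joint data
`𝔩₁ ⊗ 𝔩₂` is again an abstract location. -/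
theorem stmt_11 {H L V : Type} (dom : H → Set L) (look : H → L → V)
    (l1 l2 : AbsLoc H L V dom look)
    (hind : Indep dom look l1.toRawLoc l2.toRawLoc) :
    ∃ j : AbsLoc H L V dom look, j.toRawLoc = jointRaw l1.toRawLoc l2.toRawLoc := by
  obtain ⟨h₁, hr₁⟩ := l1.R_nonempty
  obtain ⟨h₂, hr₂⟩ := l2.R_nonempty
  obtain ⟨h, hh₁, hh₂⟩ := hind.2.2.2.2 h₁ h₂ hr₁ hr₂
  refine ⟨{ toRawLoc := jointRaw l1.toRawLoc l2.toRawLoc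
            R_nonempty := ⟨h, rel_self_left hh₁, rel_self_left hh₂⟩
            R_symm := symm_of (l1.R ⊓ l2.R)
            R_trans := trans_of (l1.R ⊓ l2.R)
            G_comp := fun _ _ => CompClosure.comp
            rely_guarantee := fun ι hι _ _ =>
              rel_apply_of_liftFun (liftFun_inf_of_compClosure hind hι).1
                (liftFun_inf_of_compClosure hind hι).2
            footprint_rely := fun hh hh' hr =>
              ⟨l1.footprint_rely (hh · <| .inl ·) (hh' · <| .inl ·) hr.1,
                l2.footprint_rely (hh · <| .inr ·) (hh' · <| .inr ·) hr.2⟩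
            guarantee_local := fun _ hι => isLocal_sup_of_compClosure hind hι }, rfl⟩
end

section
/- Fix a concrete location l storing integers and define for i = 1, 2 the abstract locations 𝔟ᵢ with footprint {l}, rely 𝔟ᵢ^R = {(h,h') | h(l) and h'(l) are integers whose i-th bit agrees}, and guarantee 𝔟ᵢ^G the functions setting the i-th bit of h(l) to a fixed value and leaving all other bits and all other locations unchanged. Then 𝔟₁ and 𝔟₂ are independent abstract locations, despite having identical (overlapping) footprints. -/
/-- The `i`-th bit of an integer `n` (for `i ≥ 1`): `(n / 2^(i-1)) % 2`. -/
def ibit (i : ℕ) (n : ℤ) : ℤ := (n / 2 ^ (i - 1)) % 2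

/-- Setting the `i`-th bit of `n` to `b`, changing only that bit. -/
def isetbit (i : ℕ) (b : ℤ) (n : ℤ) : ℤ :=
  n - ibit i n * 2 ^ (i - 1) + b * 2 ^ (i - 1)

/-- The specification of the abstract location `𝔟ᵢ`: footprint `{l}`, rely "both
contents at `l` are integers whose `i`-th bit agrees", guarantee the functions
setting the `i`-th bit of the integer stored at `l` to a fixed value (and acting as
the identity on heaps not storing an integer at `l`). -/
def bitLocSpec {H L V : Type} (dom : H → Set L) (look : H → L → V)
    (upd : H → L → V → H) (asInt : V → Option ℤ) (ofInt : ℤ → V)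
    (i : ℕ) (l : L) (a : AbsLoc H L V dom look) : Prop :=
  a.R = (fun h h' => ∃ m n : ℤ, asInt (look h l) = some m ∧
      asInt (look h' l) = some n ∧ ibit i m = ibit i n) ∧
  a.G = {f | ∃ b : ℤ, (b = 0 ∨ b = 1) ∧
      (∀ h n, asInt (look h l) = some n → f h = upd h l (ofInt (isetbit i b n))) ∧
      (∀ h, asInt (look h l) = none → f h = h)} ∧
  a.F = fun _ => ({l} : Set L)

/-!
Setting the `i`-th bit of an integer leaves it an integer and changes none of its other
bits, so every guarantee of `𝔟ᵢ` preserves the rely of `𝔟ⱼ` for `j ≠ i`, although both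
act on the same cell. Two heaps satisfying the two relies have a common rely-related
heap: store at `l` the integer of the first heap with its `j`-th bit copied from the second.
-/

lemma ibit_eq_zero_or_one (i : ℕ) (n : ℤ) : ibit i n = 0 ∨ ibit i n = 1 := by
  unfold ibit; omega

lemma isetbit_eq_add (i : ℕ) (b n : ℤ) :
    isetbit i b n = n + (b - ibit i n) * 2 ^ (i - 1) := by
  unfold isetbit; ring

lemma isetbit_ediv_two_pow (i : ℕ) (b n : ℤ) :
    isetbit i b n / 2 ^ (i - 1) = n / 2 ^ (i - 1) + (b - ibit i n) := by
  rw [isetbit_eq_add, Int.add_mul_ediv_right _ _ (by positivity)]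

lemma ibit_isetbit_self {b : ℤ} (hb : b = 0 ∨ b = 1) (i : ℕ) (n : ℤ) :
    ibit i (isetbit i b n) = b := by
  rw [ibit, isetbit_ediv_two_pow, ibit]; omega

lemma isetbit_isetbit {b' : ℤ} (hb' : b' = 0 ∨ b' = 1) (i : ℕ) (b n : ℤ) :
    isetbit i b (isetbit i b' n) = isetbit i b n := by
  rw [isetbit_eq_add, ibit_isetbit_self hb', isetbit_eq_add, isetbit_eq_add]; ring

lemma ibit_isetbit_of_lt {i j : ℕ} (hj : 1 ≤ j) (hji : j < i) (b n : ℤ) :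
    ibit j (isetbit i b n) = ibit j n := by
  have hpow : (2 : ℤ) ^ (i - 1) = 2 * 2 ^ (i - 1 - j) * 2 ^ (j - 1) := by
    rw [← pow_succ', ← pow_add]; congr 1; omega
  rw [ibit, isetbit_eq_add, hpow, ← mul_assoc, Int.add_mul_ediv_right _ _ (by positivity),
    mul_left_comm, Int.add_mul_emod_self_left, ibit]

lemma ibit_isetbit_of_gt {i j : ℕ} (hi : 1 ≤ i) (hij : i < j) {b : ℤ} (hb : b = 0 ∨ b = 1)
    (n : ℤ) : ibit j (isetbit i b n) = ibit j n := by
  have hpow : (2 : ℤ) ^ (j - 1) = 2 ^ (i - 1) * 2 * 2 ^ (j - 1 - i) := by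
    rw [← pow_succ, ← pow_add]; congr 1; omega
  -- no carry: the bits above the `i`-th one are those of `n`
  have hhigh : isetbit i b n / 2 ^ (i - 1) / 2 = n / 2 ^ (i - 1) / 2 := by
    rw [isetbit_ediv_two_pow, ibit]; omega
  simp only [ibit, hpow, Int.ediv_mul_of_nonneg (by positivity : (0 : ℤ) ≤ 2 ^ (i - 1) * 2),
    Int.ediv_mul_of_nonneg (by positivity : (0 : ℤ) ≤ 2 ^ (i - 1)), hhigh]

lemma ibit_isetbit_of_ne {i j : ℕ} (hi : 1 ≤ i) (hj : 1 ≤ j) (hij : i ≠ j) {b : ℤ}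
    (hb : b = 0 ∨ b = 1) (n : ℤ) : ibit j (isetbit i b n) = ibit j n := by
  rcases lt_or_gt_of_ne hij with h | h
  · exact ibit_isetbit_of_gt hi h hb n
  · exact ibit_isetbit_of_lt hj h b n

section BitLocation

variable {H L V : Type}

def bitRely (look : H → L → V) (asInt : V → Option ℤ) (i : ℕ) (l : L) (h h' : H) : Prop :=
  ∃ m n : ℤ, asInt (look h l) = some m ∧ asInt (look h' l) = some n ∧ ibit i m = ibit i n

def bitGuar (look : H → L → V) (upd : H → L → V → H) (asInt : V → Option ℤ)
    (ofInt : ℤ → V) (i : ℕ) (l : L) : Set (H → H) :=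
  {f | ∃ b : ℤ, (b = 0 ∨ b = 1) ∧
    (∀ h n, asInt (look h l) = some n → f h = upd h l (ofInt (isetbit i b n))) ∧
    (∀ h, asInt (look h l) = none → f h = h)}

def bitRaw (look : H → L → V) (upd : H → L → V → H) (asInt : V → Option ℤ)
    (ofInt : ℤ → V) (i : ℕ) (l : L) : RawLoc H L where
  R := bitRely look asInt i l
  G := bitGuar look upd asInt ofInt i l
  F _ := {l}

variable {dom : H → Set L} {look : H → L → V} {upd : H → L → V → H}
  {asInt : V → Option ℤ} {ofInt : ℤ → V} {i : ℕ} {l : L}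

lemma bitRely_symm {h h' : H} (hR : bitRely look asInt i l h h') :
    bitRely look asInt i l h' h := by
  obtain ⟨m, n, hm, hn, e⟩ := hR
  exact ⟨n, m, hn, hm, e.symm⟩

lemma bitRely_trans {h h' h'' : H} (hR : bitRely look asInt i l h h')
    (hR' : bitRely look asInt i l h' h'') : bitRely look asInt i l h h'' := by
  obtain ⟨m, n, hm, hn, e⟩ := hR
  obtain ⟨n', k, hn', hk, e'⟩ := hR'
  obtain rfl : n = n' := Option.some.inj (hn.symm.trans hn')
  exact ⟨m, k, hm, hk, e.trans e'⟩

lemma bitRely_of_look_eq {h h' h₁ h₁' : H} (e : look h₁ l = look h l)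
    (e' : look h₁' l = look h' l) (hR : bitRely look asInt i l h h') :
    bitRely look asInt i l h₁ h₁' := by
  rwa [bitRely, e, e']

lemma asInt_look_apply_of_mem_bitGuar (h_of : ∀ n : ℤ, asInt (ofInt n) = some n)
    (hlook_eq : ∀ h l v, look (upd h l v) l = v) {ι : H → H}
    (hι : ι ∈ bitGuar look upd asInt ofInt i l) :
    ∃ b : ℤ, (b = 0 ∨ b = 1) ∧ ∀ h n, asInt (look h l) = some n →
      asInt (look (ι h) l) = some (isetbit i b n) := by
  obtain ⟨b, hb, hset, -⟩ := hι
  exact ⟨b, hb, fun h n hn => by rw [hset h n hn, hlook_eq, h_of]⟩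

lemma comp_mem_bitGuar (h_of : ∀ n : ℤ, asInt (ofInt n) = some n)
    (hlook_eq : ∀ h l v, look (upd h l v) l = v)
    (hupd_upd : ∀ h l v v', upd (upd h l v) l v' = upd h l v') {ι κ : H → H}
    (hι : ι ∈ bitGuar look upd asInt ofInt i l) (hκ : κ ∈ bitGuar look upd asInt ofInt i l) :
    ι ∘ κ ∈ bitGuar look upd asInt ofInt i l := by
  obtain ⟨b, hb, hιset, hιid⟩ := hι
  obtain ⟨b', hb', hκset, hκid⟩ := hκ
  refine ⟨b, hb, fun h n hn => ?_, fun h hn => ?_⟩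
  · have hκn : asInt (look (κ h) l) = some (isetbit i b' n) := by
      rw [hκset h n hn, hlook_eq, h_of]
    rw [Function.comp_apply, hιset _ _ hκn, hκset h n hn, hupd_upd, isetbit_isetbit hb']
  · rw [Function.comp_apply, hκid h hn, hιid h hn]

lemma bitRely_apply_of_mem_bitGuar (h_of : ∀ n : ℤ, asInt (ofInt n) = some n)
    (hlook_eq : ∀ h l v, look (upd h l v) l = v) {ι : H → H}
    (hι : ι ∈ bitGuar look upd asInt ofInt i l) {h h' : H} {m n : ℤ}
    (hm : asInt (look h l) = some m) (hn : asInt (look h' l) = some n) :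
    bitRely look asInt i l (ι h) (ι h') := by
  obtain ⟨b, hb, hset⟩ := asInt_look_apply_of_mem_bitGuar h_of hlook_eq hι
  exact ⟨_, _, hset h m hm, hset h' n hn, by rw [ibit_isetbit_self hb, ibit_isetbit_self hb]⟩

lemma rely_guarantee_bitGuar (h_of : ∀ n : ℤ, asInt (ofInt n) = some n)
    (hlook_eq : ∀ h l v, look (upd h l v) l = v) {ι : H → H}
    (hι : ι ∈ bitGuar look upd asInt ofInt i l) {h h' : H}
    (hR : bitRely look asInt i l h h') :
    bitRely look asInt i l (ι h) (ι h') ∧ bitRely look asInt i l (ι h) (ι (ι h)) ∧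
      bitRely look asInt i l (ι h') (ι (ι h')) := by
  obtain ⟨m, n, hm, hn, -⟩ := hR
  obtain ⟨b, -, hset⟩ := asInt_look_apply_of_mem_bitGuar h_of hlook_eq hι
  exact ⟨bitRely_apply_of_mem_bitGuar h_of hlook_eq hι hm hn,
    bitRely_apply_of_mem_bitGuar h_of hlook_eq hι hm (hset h m hm),
    bitRely_apply_of_mem_bitGuar h_of hlook_eq hι hn (hset h' n hn)⟩

lemma dom_subset_dom_apply_of_mem_bitGuar (hdom : ∀ h l v, dom (upd h l v) = dom h)
    {ι : H → H} (hι : ι ∈ bitGuar look upd asInt ofInt i l) (h : H) : dom h ⊆ dom (ι h) := by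
  obtain ⟨b, -, hset, hid⟩ := hι
  rcases hn : asInt (look h l) with _ | n
  · rw [hid h hn]
  · rw [hset h n hn, hdom]

lemma look_apply_of_mem_bitGuar_of_ne
    (hlook_ne : ∀ h l v l', l' ≠ l → look (upd h l v) l' = look h l') {ι : H → H}
    (hι : ι ∈ bitGuar look upd asInt ofInt i l) (h : H) {l' : L} (hl' : l' ≠ l) :
    look (ι h) l' = look h l' := by
  obtain ⟨b, -, hset, hid⟩ := hι
  rcases hn : asInt (look h l) with _ | n
  · rw [hid h hn]
  · rw [hset h n hn, hlook_ne h l _ l' hl']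

def bitLoc (h_of : ∀ n : ℤ, asInt (ofInt n) = some n)
    (hdom : ∀ h l v, dom (upd h l v) = dom h)
    (hlook_eq : ∀ h l v, look (upd h l v) l = v)
    (hlook_ne : ∀ h l v l', l' ≠ l → look (upd h l v) l' = look h l')
    (hupd_upd : ∀ h l v v', upd (upd h l v) l v' = upd h l v')
    (hex : ∀ l : L, ∃ h : H, ∃ n : ℤ, l ∈ dom h ∧ asInt (look h l) = some n)
    (i : ℕ) (l : L) : AbsLoc H L V dom look where
  toRawLoc := bitRaw look upd asInt ofInt i l
  R_nonempty := by
    obtain ⟨h, n, -, hn⟩ := hex l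
    exact ⟨h, n, n, hn, hn, rfl⟩
  R_symm := bitRely_symm
  R_trans := bitRely_trans
  G_comp _ _ := comp_mem_bitGuar h_of hlook_eq hupd_upd
  rely_guarantee _ hι _ _ := rely_guarantee_bitGuar h_of hlook_eq hι
  footprint_rely e e' := bitRely_of_look_eq (e l rfl) (e' l rfl)
  guarantee_local _ hι h := ⟨dom_subset_dom_apply_of_mem_bitGuar hdom hι h,
    fun _ _ hl' => ⟨hl', (look_apply_of_mem_bitGuar_of_ne hlook_ne hι h hl').symm⟩⟩

lemma bitLocSpec_bitLoc (h_of : ∀ n : ℤ, asInt (ofInt n) = some n)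
    (hdom : ∀ h l v, dom (upd h l v) = dom h)
    (hlook_eq : ∀ h l v, look (upd h l v) l = v)
    (hlook_ne : ∀ h l v l', l' ≠ l → look (upd h l v) l' = look h l')
    (hupd_upd : ∀ h l v v', upd (upd h l v) l v' = upd h l v')
    (hex : ∀ l : L, ∃ h : H, ∃ n : ℤ, l ∈ dom h ∧ asInt (look h l) = some n) (i : ℕ) (l : L) :
    bitLocSpec dom look upd asInt ofInt i l
      (bitLoc h_of hdom hlook_eq hlook_ne hupd_upd hex i l) :=
  ⟨rfl, rfl, rfl⟩

lemma bitRely_apply_left_of_mem_bitGuar {j : ℕ} (hi : 1 ≤ i) (hj : 1 ≤ j) (hij : i ≠ j)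
    (h_of : ∀ n : ℤ, asInt (ofInt n) = some n)
    (hlook_eq : ∀ h l v, look (upd h l v) l = v) {ι : H → H}
    (hι : ι ∈ bitGuar look upd asInt ofInt i l) {h h' : H}
    (hR : bitRely look asInt j l h h') : bitRely look asInt j l (ι h) h' := by
  obtain ⟨b, hb, hset⟩ := asInt_look_apply_of_mem_bitGuar h_of hlook_eq hι
  obtain ⟨m, n, hm, hn, e⟩ := hR
  exact ⟨_, n, hset h m hm, hn, by rwa [ibit_isetbit_of_ne hi hj hij hb]⟩

lemma exists_bitRely_bitRely {j : ℕ} (hi : 1 ≤ i) (hj : 1 ≤ j) (hij : i ≠ j)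
    (h_of : ∀ n : ℤ, asInt (ofInt n) = some n)
    (hlook_eq : ∀ h l v, look (upd h l v) l = v) {h₁ h₂ : H}
    (hR₁ : bitRely look asInt i l h₁ h₁) (hR₂ : bitRely look asInt j l h₂ h₂) :
    ∃ h, bitRely look asInt i l h h₁ ∧ bitRely look asInt j l h h₂ := by
  obtain ⟨m₁, -, hm₁, -⟩ := hR₁
  obtain ⟨m₂, -, hm₂, -⟩ := hR₂
  have hlook : asInt (look (upd h₁ l (ofInt (isetbit j (ibit j m₂) m₁))) l) =
      some (isetbit j (ibit j m₂) m₁) := by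
    rw [hlook_eq, h_of]
  exact ⟨_, ⟨_, m₁, hlook, hm₁, ibit_isetbit_of_ne hj hi hij.symm (ibit_eq_zero_or_one j m₂) m₁⟩,
    ⟨_, m₂, hlook, hm₂, ibit_isetbit_self (ibit_eq_zero_or_one j m₂) j m₁⟩⟩

lemma indep_bitRaw {j : ℕ} (hi : 1 ≤ i) (hj : 1 ≤ j) (hij : i ≠ j)
    (h_of : ∀ n : ℤ, asInt (ofInt n) = some n)
    (hlook_eq : ∀ h l v, look (upd h l v) l = v) :
    Indep dom look (bitRaw look upd asInt ofInt i l) (bitRaw look upd asInt ofInt j l) :=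
  ⟨fun _ hι _ _ _ hR => bitRely_apply_left_of_mem_bitGuar hi hj hij h_of hlook_eq hι hR,
    fun _ hι _ _ _ hR => bitRely_apply_left_of_mem_bitGuar hj hi hij.symm h_of hlook_eq hι hR,
    fun _ _ _ _ _ hl => hl, fun _ _ _ _ _ hl => hl,
    fun _ _ hR₁ hR₂ => exists_bitRely_bitRely hi hj hij h_of hlook_eq hR₁ hR₂⟩

end BitLocation

/-- Fixing a concrete location `l` storing integers, the two abstract locations
`𝔟₁` and `𝔟₂` (whose relies compare the first, resp. second, bit of the integer
stored at `l`, and whose guarantees set that bit) are abstract locations and are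
independent, despite having identical overlapping footprints `{l}`. -/
theorem stmt_14 {H L V : Type} (dom : H → Set L) (look : H → L → V)
    (upd : H → L → V → H) (asInt : V → Option ℤ) (ofInt : ℤ → V)
    (h_of : ∀ n : ℤ, asInt (ofInt n) = some n)
    (hdom : ∀ h l v, dom (upd h l v) = dom h)
    (hlook_eq : ∀ h l v, look (upd h l v) l = v)
    (hlook_ne : ∀ h l v l', l' ≠ l → look (upd h l v) l' = look h l')
    (hupd_upd : ∀ h l v v', upd (upd h l v) l v' = upd h l v')
    (hex : ∀ l : L, ∃ h : H, ∃ n : ℤ, l ∈ dom h ∧ asInt (look h l) = some n)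
    (l : L) :
    ∃ b1 b2 : AbsLoc H L V dom look,
      bitLocSpec dom look upd asInt ofInt 1 l b1 ∧
      bitLocSpec dom look upd asInt ofInt 2 l b2 ∧
      Indep dom look b1.toRawLoc b2.toRawLoc := by
  exact ⟨bitLoc h_of hdom hlook_eq hlook_ne hupd_upd hex 1 l,
    bitLoc h_of hdom hlook_eq hlook_ne hupd_upd hex 2 l,
    bitLocSpec_bitLoc h_of hdom hlook_eq hlook_ne hupd_upd hex 1 l,
    bitLocSpec_bitLoc h_of hdom hlook_eq hlook_ne hupd_upd hex 2 l,
    indep_bitRaw le_rfl one_le_two (by decide) h_of hlook_eq⟩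
end
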